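/- arXiv:2103.00297 — 8 statements merged into one kernel-verified Lean document; each statement's English description precedes it below -/
import Mathlib

section
/- (Incremental Core Computation) Let A and B be disjoint finite sets with E = A ∪ B satisfying a monotonic criterion. Let A' ⊆ A be locally minimal such that A' ∪ B satisfies the criterion (i.e., check(A' ∪ B) holds but for every x ∈ A', check((A' \ {x}) ∪ B) fails), and let B' ⊆ B be locally minimal such that A' ∪ B' satisfies the criterion. Then A' ∪ B' is a core of E, i.e., check(A' ∪ B') holds and removing any single element from A' ∪ B' makes the criterion fail. -/
open Finset

theorem incremental_core_general {α : Type*} [DecidableEq α]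
    (check : Finset α → Prop) (A B E : Finset α)
    (hE : E = A ∪ B)
    (mono : ∀ X Y : Finset α, X ⊆ Y → Y ⊆ E → check X → check Y)
    (A' : Finset α) (hA'sub : A' ⊆ A)
    (hA'min : ∀ x ∈ A', ¬ check ((A'.erase x) ∪ B))
    (B' : Finset α) (hB'sub : B' ⊆ B)
    (hB'check : check (A' ∪ B'))
    (hB'min : ∀ x ∈ B', ¬ check (A' ∪ (B'.erase x))) :
    check (A' ∪ B') ∧ ∀ x ∈ A' ∪ B', ¬ check ((A' ∪ B').erase x) := by
  subst hE
  refine ⟨hB'check, fun x hx hchk => ?_⟩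
  rw [erase_union_distrib] at hchk
  rcases mem_union.mp hx with hxA | hxB
  -- Shrinking `B` to `B'` keeps `A'` minimal: its test sets only get smaller, and failure is inherited.
  · refine hA'min x hxA (mono _ _ ?_ ?_ hchk)
    · exact union_subset_union subset_rfl ((erase_subset x B').trans hB'sub)
    · exact union_subset_union ((erase_subset x A').trans hA'sub) subset_rfl
  · refine hB'min x hxB (mono _ _ ?_ ?_ hchk)
    · exact union_subset_union (erase_subset x A') subset_rfl
    · exact union_subset_union hA'sub ((erase_subset x B').trans hB'sub)

/-- Incremental Core Computation: minimizing `A` relative to `B`,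
then minimizing `B` relative to the result, yields a core of `E = A ∪ B`. -/
theorem incremental_core {α : Type*} [DecidableEq α]
    (check : Finset α → Prop) (A B E : Finset α)
    (hE : E = A ∪ B) (hdisj : Disjoint A B)
    (mono : ∀ X Y : Finset α, X ⊆ Y → Y ⊆ E → check X → check Y)
    (hcheckE : check E)
    (A' : Finset α) (hA'sub : A' ⊆ A)
    (hA'check : check (A' ∪ B))
    (hA'min : ∀ x ∈ A', ¬ check ((A'.erase x) ∪ B))
    (B' : Finset α) (hB'sub : B' ⊆ B)
    (hB'check : check (A' ∪ B'))
    (hB'min : ∀ x ∈ B', ¬ check (A' ∪ (B'.erase x))) :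
    check (A' ∪ B') ∧ ∀ x ∈ A' ∪ B', ¬ check ((A' ∪ B').erase x) :=
  incremental_core_general check A B E hE mono A' hA'sub hA'min B' hB'sub hB'check hB'min
end

section
/- Let E satisfy a monotonic criterion, let C₀ be a core of E, and let CI = {x ∈ C₀ | check(E \ {x}) fails}. Then CI equals the intersection of all cores of E. -/
/-!
Cores are the `⊆`-minimal sets satisfying `check`. If `check (E \ {x})` holds, it contains a core,
which misses `x`; so a point lying in every core (in particular in `C₀`) has `¬ check (E \ {x})`.
Conversely, if `check (E \ {x})` fails, then by monotonicity no set satisfying `check` inside `E`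
can avoid `x`, so `x` lies in every core.
-/

open Finset

section

variable {α : Type*} [DecidableEq α] {check : Finset α → Prop} {E C : Finset α} {x : α}

theorem mem_of_check_of_not_check_erase
    (mono : ∀ A B : Finset α, A ⊆ B → B ⊆ E → check A → check B)
    (hCE : C ⊆ E) (hC : check C) (hx : ¬ check (E.erase x)) : x ∈ C := by
  by_contra hxC
  exact hx (mono C (E.erase x) (subset_erase.2 ⟨hCE, hxC⟩) (erase_subset x E) hC)

theorem not_check_erase_of_forall_minimal_mem (h : ∀ C ⊆ E, Minimal check C → x ∈ C) :
    ¬ check (E.erase x) := fun hcheck ↦ by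
  obtain ⟨C, hCE, hC⟩ := exists_minimal_le_of_wellFoundedLT check (E.erase x) hcheck
  exact notMem_erase x E (hCE (h C (hCE.trans (erase_subset x E)) hC))

end

theorem ci_eq_core_intersection_general {α : Type*} [DecidableEq α] (E : Finset α)
    (check : Finset α → Prop)
    (mono : ∀ A B : Finset α, A ⊆ B → B ⊆ E → check A → check B)
    (C₀ : Finset α) (hC₀E : C₀ ⊆ E) (hC₀ : check C₀)
    (hC₀min : ∀ C' ⊂ C₀, ¬ check C') :
    ∀ x, (x ∈ C₀ ∧ ¬ check (E.erase x)) ↔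
      (x ∈ E ∧ ∀ C : Finset α, C ⊆ E → check C → (∀ C' ⊂ C, ¬ check C') → x ∈ C) := by
  intro x
  constructor
  · rintro ⟨hxC₀, hx⟩
    exact ⟨hC₀E hxC₀, fun C hCE hC _ ↦ mem_of_check_of_not_check_erase mono hCE hC hx⟩
  · rintro ⟨-, hall⟩
    have hcore : ∀ C ⊆ E, Minimal check C → x ∈ C := fun C hCE hC ↦
      hall C hCE hC.prop fun _ ↦ hC.not_prop_of_lt
    exact ⟨hcore C₀ hC₀E (minimal_iff_forall_lt.2 ⟨hC₀, hC₀min⟩),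
      not_check_erase_of_forall_minimal_mem hcore⟩

/-- Lemma 2: given a core `C₀` of `E`, the set
`CI = {x ∈ C₀ | ¬check(E \ {x})}` equals the intersection of all cores of `E`. -/
theorem ci_eq_core_intersection {α : Type*} [DecidableEq α] (E : Finset α)
    (check : Finset α → Prop)
    (mono : ∀ A B : Finset α, A ⊆ B → B ⊆ E → check A → check B)
    (hE : check E)
    (C₀ : Finset α) (hC₀E : C₀ ⊆ E) (hC₀ : check C₀)
    (hC₀min : ∀ C' ⊂ C₀, ¬ check C') :
    ∀ x, (x ∈ C₀ ∧ ¬ check (E.erase x)) ↔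
      (x ∈ E ∧ ∀ C : Finset α, C ⊆ E → check C → (∀ C' ⊂ C, ¬ check C') → x ∈ C) :=
  ci_eq_core_intersection_general E check mono C₀ hC₀E hC₀ hC₀min
end

section
/- Let E satisfy a monotonic criterion, let C₀ be a core of E, and let C be any core of E with C ≠ C₀. Then there exists x ∈ C₀ such that x ∉ C and check(E \ {x}) holds. -/
theorem Finset.exists_mem_notMem_of_forall_ssubset_not {α : Type*} {p : Finset α → Prop}
    {s t : Finset α} (hs : ∀ u ⊂ s, ¬ p u) (ht : p t) (hne : s ≠ t) : ∃ x ∈ t, x ∉ s := by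
  refine Finset.not_subset.mp fun hts => ?_
  rcases hts.eq_or_ssubset with rfl | hts
  · exact hne rfl
  · exact hs t hts ht

theorem punch_step_general {α : Type*} [DecidableEq α] (E : Finset α)
    (check : Finset α → Prop)
    (mono : ∀ A B : Finset α, A ⊆ B → B ⊆ E → check A → check B)
    (C₀ : Finset α) (hC₀ : check C₀)
    (C : Finset α) (hCE : C ⊆ E) (hC : check C)
    (hCmin : ∀ C' ⊂ C, ¬ check C')
    (hne : C ≠ C₀) :
    ∃ x ∈ C₀, x ∉ C ∧ check (E.erase x) := by
  obtain ⟨x, hxC₀, hxC⟩ := Finset.exists_mem_notMem_of_forall_ssubset_not hCmin hC₀ hne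
  exact ⟨x, hxC₀, hxC,
    mono C (E.erase x) (Finset.subset_erase.2 ⟨hCE, hxC⟩) (E.erase_subset x) hC⟩

/-- if `C₀` and `C` are cores of `E` with `C ≠ C₀`, then some
`x ∈ C₀` satisfies `x ∉ C` and `check (E \ {x})`. -/
theorem punch_step {α : Type*} [DecidableEq α] (E : Finset α)
    (check : Finset α → Prop)
    (mono : ∀ A B : Finset α, A ⊆ B → B ⊆ E → check A → check B)
    (hE : check E)
    (C₀ : Finset α) (hC₀E : C₀ ⊆ E) (hC₀ : check C₀)
    (hC₀min : ∀ C' ⊂ C₀, ¬ check C')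
    (C : Finset α) (hCE : C ⊆ E) (hC : check C)
    (hCmin : ∀ C' ⊂ C, ¬ check C')
    (hne : C ≠ C₀) :
    ∃ x ∈ C₀, x ∉ C ∧ check (E.erase x) :=
  punch_step_general E check mono C₀ hC₀ C hCE hC hCmin hne
end

section
/- Let Base and A be disjoint subsets of a finite set E with monotonic criterion check such that check(Base ∪ A) holds, and let A' ⊆ A be locally minimal with check(Base ∪ A') holding. If Base is a subset of every core of E, then Base ∪ A' is a core of E. -/
/-!
A proper subset `C'` of `Base ∪ A'` satisfying `check` would contain a core `D`, and `D ⊇ Base`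
by hypothesis. Hence the element of `Base ∪ A'` that `D` misses lies in `A'`, so
`D ⊆ Base ∪ A'.erase x` for some `x ∈ A'`, and monotonicity contradicts local minimality of `A'`.
-/

namespace Finset

variable {α : Type*} [DecidableEq α]

theorem exists_mem_subset_union_erase_of_ssubset {s B T : Finset α} (hB : B ⊆ s)
    (hs : s ⊂ B ∪ T) : ∃ x ∈ T, s ⊆ B ∪ T.erase x := by
  obtain ⟨x, hxBT, hxs⟩ := exists_of_ssubset hs
  have hxB : x ∉ B := fun h => hxs (hB h)
  refine ⟨x, (mem_union.mp hxBT).resolve_left hxB, ?_⟩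
  rw [← erase_eq_of_notMem hxB, ← erase_union_distrib]
  exact subset_erase.mpr ⟨hs.subset, hxs⟩

end Finset

open Finset

theorem min_with_base_core_general {α : Type*} [DecidableEq α] (E : Finset α)
    (check : Finset α → Prop)
    (mono : ∀ A B : Finset α, A ⊆ B → B ⊆ E → check A → check B)
    (Base A : Finset α) (hBaseE : Base ⊆ E) (hAE : A ⊆ E)
    (A' : Finset α) (hA'sub : A' ⊆ A)
    (hA'check : check (Base ∪ A'))
    (hA'min : ∀ x ∈ A', ¬ check (Base ∪ (A'.erase x)))
    (hBaseCores : ∀ C : Finset α, C ⊆ E → check C →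
      (∀ C' ⊂ C, ¬ check C') → Base ⊆ C) :
    (Base ∪ A') ⊆ E ∧ check (Base ∪ A') ∧ ∀ C' ⊂ Base ∪ A', ¬ check C' := by
  have hUE : Base ∪ A' ⊆ E := union_subset hBaseE (hA'sub.trans hAE)
  refine ⟨hUE, hA'check, fun C' hC' hC'check => ?_⟩
  obtain ⟨D, hDC', hDmin⟩ := exists_minimal_le_of_wellFoundedLT check C' hC'check
  obtain ⟨hDcheck, hDcore⟩ := minimal_iff_forall_lt.mp hDmin
  have hDssub : D ⊂ Base ∪ A' := hDC'.trans_ssubset hC'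
  have hBaseD : Base ⊆ D := hBaseCores D (hDssub.subset.trans hUE) hDcheck hDcore
  obtain ⟨x, hx, hDx⟩ := exists_mem_subset_union_erase_of_ssubset hBaseD hDssub
  exact hA'min x hx <|
    mono D _ hDx ((union_subset_union_right (erase_subset x A')).trans hUE) hDcheck

/-- Prop. 2(i): minimization with a base: if `Base` is a subset
of every core of `E` and `A' ⊆ A` is locally minimal with `check (Base ∪ A')`,
then `Base ∪ A'` is a core of `E`. -/
theorem min_with_base_core {α : Type*} [DecidableEq α] (E : Finset α)
    (check : Finset α → Prop)
    (mono : ∀ A B : Finset α, A ⊆ B → B ⊆ E → check A → check B)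
    (Base A : Finset α) (hBaseE : Base ⊆ E) (hAE : A ⊆ E)
    (hdisj : Disjoint Base A) (hBA : check (Base ∪ A))
    (A' : Finset α) (hA'sub : A' ⊆ A)
    (hA'check : check (Base ∪ A'))
    (hA'min : ∀ x ∈ A', ¬ check (Base ∪ (A'.erase x)))
    (hBaseCores : ∀ C : Finset α, C ⊆ E → check C →
      (∀ C' ⊂ C, ¬ check C') → Base ⊆ C) :
    (Base ∪ A') ⊆ E ∧ check (Base ∪ A') ∧ ∀ C' ⊂ Base ∪ A', ¬ check C' :=
  min_with_base_core_general E check mono Base A hBaseE hAE A' hA'sub hA'check hA'min hBaseCores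
end

section
/- Let Base and A be disjoint subsets of a finite set E with monotonic criterion check such that check(Base ∪ A) holds, and let A' ⊆ A be locally minimal with check(Base ∪ A') holding. If Base contains a core of E, then A' = ∅. -/
theorem check_union_of_subset_check {α : Type*} [DecidableEq α] {E : Finset α}
    {check : Finset α → Prop}
    (mono : ∀ A B : Finset α, A ⊆ B → B ⊆ E → check A → check B)
    {Base C S : Finset α} (hBaseE : Base ⊆ E) (hSE : S ⊆ E)
    (hCBase : C ⊆ Base) (hC : check C) :
    check (Base ∪ S) :=
  mono C _ (hCBase.trans Finset.subset_union_left) (Finset.union_subset hBaseE hSE) hC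

theorem min_with_base_empty_general {α : Type*} [DecidableEq α] (E : Finset α)
    (check : Finset α → Prop)
    (mono : ∀ A B : Finset α, A ⊆ B → B ⊆ E → check A → check B)
    (Base A : Finset α) (hBaseE : Base ⊆ E) (hAE : A ⊆ E)
    (A' : Finset α) (hA'sub : A' ⊆ A)
    (hA'min : ∀ x ∈ A', ¬ check (Base ∪ (A'.erase x)))
    (hBaseCore : ∃ C : Finset α, C ⊆ Base ∧ check C ∧ ∀ C' ⊂ C, ¬ check C') :
    A' = ∅ := by
  obtain ⟨C, hCBase, hC, -⟩ := hBaseCore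
  refine Finset.eq_empty_of_forall_notMem fun x hx => hA'min x hx ?_
  have hErasedE : A'.erase x ⊆ E := ((A'.erase_subset x).trans hA'sub).trans hAE
  exact check_union_of_subset_check mono hBaseE hErasedE hCBase hC

/-- Prop. 2(ii): if `Base` contains a core of `E`, then a locally
minimal `A' ⊆ A` with `check (Base ∪ A')` must be empty. -/
theorem min_with_base_empty {α : Type*} [DecidableEq α] (E : Finset α)
    (check : Finset α → Prop)
    (mono : ∀ A B : Finset α, A ⊆ B → B ⊆ E → check A → check B)
    (Base A : Finset α) (hBaseE : Base ⊆ E) (hAE : A ⊆ E)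
    (hdisj : Disjoint Base A) (hBA : check (Base ∪ A))
    (A' : Finset α) (hA'sub : A' ⊆ A)
    (hA'check : check (Base ∪ A'))
    (hA'min : ∀ x ∈ A', ¬ check (Base ∪ (A'.erase x)))
    (hBaseCore : ∃ C : Finset α, C ⊆ Base ∧ check C ∧ ∀ C' ⊂ C, ¬ check C') :
    A' = ∅ :=
  min_with_base_empty_general E check mono Base A hBaseE hAE A' hA'sub hA'min hBaseCore
end

section
/- If a finite set E has exactly one core C under a monotonic criterion, then for every x ∈ C, check(E \ {x}) fails; equivalently, the set Cont = {x ∈ C | check(E \ {x}) holds} is empty. -/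
theorem Finset.exists_subset_forall_ssubset_not {α : Type*} (p : Finset α → Prop)
    {S : Finset α} (hS : p S) : ∃ C ⊆ S, p C ∧ ∀ D ⊂ C, ¬ p D := by
  obtain ⟨C, hCS, hmin⟩ := exists_minimal_le_of_wellFoundedLT p S hS
  exact ⟨C, hCS, hmin.prop, fun _ hD => hmin.not_prop_of_lt hD⟩

theorem unique_core_cont_empty_general {α : Type*} [DecidableEq α] (E : Finset α)
    (check : Finset α → Prop)
    (C : Finset α)
    (huniq : ∀ C' : Finset α, C' ⊆ E → check C' → (∀ D ⊂ C', ¬ check D) → C' = C) :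
    ∀ x ∈ C, ¬ check (E.erase x) := by
  intro x hxC hcheck
  obtain ⟨C', hC'x, hC', hC'min⟩ := Finset.exists_subset_forall_ssubset_not check hcheck
  obtain rfl := huniq C' (hC'x.trans (E.erase_subset x)) hC' hC'min
  exact E.notMem_erase x (hC'x hxC)

/-- if `E` has exactly one core `C`, then for every `x ∈ C`,
`check (E \ {x})` fails, i.e. `Cont = {x ∈ C | check (E \ {x})}` is empty. -/
theorem unique_core_cont_empty {α : Type*} [DecidableEq α] (E : Finset α)
    (check : Finset α → Prop)
    (mono : ∀ A B : Finset α, A ⊆ B → B ⊆ E → check A → check B)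
    (hE : check E)
    (C : Finset α) (hCE : C ⊆ E) (hC : check C)
    (hCmin : ∀ C' ⊂ C, ¬ check C')
    (huniq : ∀ C' : Finset α, C' ⊆ E → check C' → (∀ D ⊂ C', ¬ check D) → C' = C) :
    ∀ x ∈ C, ¬ check (E.erase x) :=
  unique_core_cont_empty_general E check C huniq
end

section
/- Let check be a monotonic criterion on subsets of a finite set E with check E holding. If C is a core of E and x ∈ E \ C, then every core of E \ {x} is also a core of E; conversely, every core of E not containing x is a core of E \ {x}. Hence the set of cores of E equals the union of {C₀} with the cores of the punched sets E \ {x} over all x ∈ C₀ with check(E \ {x}) holding, where C₀ is any fixed core of E. -/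
/-! Being a core of `S` depends on `S` only through `C ⊆ S`, so cores move freely between `E` and
any `E \ {x}` containing them. By minimality a core contains no other set satisfying `check`, so a
core `C ≠ C₀` misses some `x ∈ C₀`; then `C ⊆ E \ {x}`, and monotonicity gives `check (E \ {x})`. -/

/-- A core of `S` w.r.t. `check`: a subset of `S` satisfying `check` such that
removing any single element makes `check` fail. -/
def IsCore {α : Type*} [DecidableEq α] (check : Finset α → Prop)
    (S C : Finset α) : Prop :=
  C ⊆ S ∧ check C ∧ ∀ x ∈ C, ¬ check (C.erase x)

namespace IsCore

variable {α : Type*} [DecidableEq α] {check : Finset α → Prop} {S T C D : Finset α}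

theorem of_subset (hC : IsCore check S C) (hCT : C ⊆ T) : IsCore check T C :=
  ⟨hCT, hC.2⟩

theorem erase_ground (hC : IsCore check S C) {x : α} (hx : x ∉ C) :
    IsCore check (S.erase x) C :=
  hC.of_subset (Finset.subset_erase.2 ⟨hC.1, hx⟩)

theorem eq_of_subset (mono : ∀ A B : Finset α, A ⊆ B → B ⊆ S → check A → check B)
    (hC : IsCore check S C) (hD : check D) (hDC : D ⊆ C) : D = C := by
  by_contra hne
  obtain ⟨y, hyC, hyD⟩ := Finset.exists_of_ssubset (hDC.ssubset_of_ne hne)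
  have hDy : D ⊆ C.erase y := Finset.subset_erase.2 ⟨hDC, hyD⟩
  exact hC.2.2 y hyC (mono D _ hDy ((C.erase_subset y).trans hC.1) hD)

end IsCore

theorem punch_structure_general {α : Type*} [DecidableEq α] (E : Finset α)
    (check : Finset α → Prop)
    (mono : ∀ A B : Finset α, A ⊆ B → B ⊆ E → check A → check B) :
    (∀ C : Finset α, IsCore check E C → ∀ x ∈ E, x ∉ C →
      ∀ D : Finset α, IsCore check (E.erase x) D → IsCore check E D) ∧
    (∀ C : Finset α, IsCore check E C → ∀ x, x ∉ C → IsCore check (E.erase x) C) ∧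
    (∀ C₀ : Finset α, IsCore check E C₀ →
      ∀ C : Finset α, IsCore check E C ↔
        (C = C₀ ∨ ∃ x ∈ C₀, check (E.erase x) ∧ IsCore check (E.erase x) C)) := by
  refine ⟨fun _ _ x _ _ D hD => hD.of_subset (hD.1.trans (E.erase_subset x)),
    fun C hC x hx => hC.erase_ground hx, fun C₀ hC₀ C => ⟨fun hC => ?_, ?_⟩⟩
  · by_cases hC₀C : C₀ ⊆ C
    · exact Or.inl (hC.eq_of_subset mono hC₀.2.1 hC₀C).symm
    · obtain ⟨x, hxC₀, hxC⟩ := Finset.not_subset.1 hC₀C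
      have hCx : IsCore check (E.erase x) C := hC.erase_ground hxC
      exact Or.inr ⟨x, hxC₀, mono C _ hCx.1 (E.erase_subset x) hC.2.1, hCx⟩
  · rintro (rfl | ⟨x, -, -, hCx⟩)
    · exact hC₀
    · exact hCx.of_subset (hCx.1.trans (E.erase_subset x))

/-- the structural recursion underlying Punch: cores transfer
between `E` and punched sets `E \ {x}`, and the cores of `E` are exactly `C₀`
together with the cores of the punched sets `E \ {x}` for `x ∈ C₀` with
`check (E \ {x})`. -/
theorem punch_structure {α : Type*} [DecidableEq α] (E : Finset α)
    (check : Finset α → Prop)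
    (mono : ∀ A B : Finset α, A ⊆ B → B ⊆ E → check A → check B)
    (hE : check E) :
    (∀ C : Finset α, IsCore check E C → ∀ x ∈ E, x ∉ C →
      ∀ D : Finset α, IsCore check (E.erase x) D → IsCore check E D) ∧
    (∀ C : Finset α, IsCore check E C → ∀ x, x ∉ C → IsCore check (E.erase x) C) ∧
    (∀ C₀ : Finset α, IsCore check E C₀ →
      ∀ C : Finset α, IsCore check E C ↔
        (C = C₀ ∨ ∃ x ∈ C₀, check (E.erase x) ∧ IsCore check (E.erase x) C)) :=
  punch_structure_general E check mono
end

section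
/- Let check be monotonic on subsets of a finite set E and suppose E = I ∪ T ∪ J is a partition of E into three pairwise disjoint sets. Let J' ⊆ J be locally minimal with check(I ∪ T ∪ J') holding; let T' ⊆ T be locally minimal with check(I ∪ T' ∪ J') holding; let I' ⊆ I be locally minimal with check(I' ∪ T' ∪ J') holding. Then I' ∪ T' ∪ J' is a core of E. -/
/-! Removing an element `x` of `I' ∪ T' ∪ J'` yields a subset of the set that was rejected when
`x` was tested during the minimization of its own part (with the other parts at their values at
that time, which contain the final ones). By monotonicity the smaller set is rejected as well. -/

namespace Finset

variable {α : Type*} [DecidableEq α]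

theorem erase_union_union_subset {A B C A' B' C' : Finset α} (x : α)
    (hA : A.erase x ⊆ A') (hB : B.erase x ⊆ B') (hC : C.erase x ⊆ C') :
    (A ∪ B ∪ C).erase x ⊆ A' ∪ B' ∪ C' := by
  rw [erase_union_distrib, erase_union_distrib]
  exact union_subset_union (union_subset_union hA hB) hC

end Finset

theorem quickcore_compositional_general {α : Type*} [DecidableEq α]
    (check : Finset α → Prop) (I T J E : Finset α)
    (hE : E = I ∪ T ∪ J)
    (mono : ∀ A B : Finset α, A ⊆ B → B ⊆ E → check A → check B)
    (J' : Finset α) (hJ'sub : J' ⊆ J)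
    (hJ'min : ∀ x ∈ J', ¬ check (I ∪ T ∪ (J'.erase x)))
    (T' : Finset α) (hT'sub : T' ⊆ T)
    (hT'min : ∀ x ∈ T', ¬ check (I ∪ (T'.erase x) ∪ J'))
    (I' : Finset α) (hI'sub : I' ⊆ I)
    (hI'check : check (I' ∪ T' ∪ J'))
    (hI'min : ∀ x ∈ I', ¬ check ((I'.erase x) ∪ T' ∪ J')) :
    check (I' ∪ T' ∪ J') ∧
    ∀ x ∈ I' ∪ T' ∪ J', ¬ check ((I' ∪ T' ∪ J').erase x) := by
  refine ⟨hI'check, fun x hx => ?_⟩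
  have rejected_of_superset_rejected {U : Finset α} (hUE : U ⊆ E) (hU : ¬ check U)
      (hxU : (I' ∪ T' ∪ J').erase x ⊆ U) : ¬ check ((I' ∪ T' ∪ J').erase x) :=
    mt (mono _ _ hxU hUE) hU
  have hI'x : I'.erase x ⊆ I := (I'.erase_subset x).trans hI'sub
  have hT'x : T'.erase x ⊆ T := (T'.erase_subset x).trans hT'sub
  have hJ'x : J'.erase x ⊆ J := (J'.erase_subset x).trans hJ'sub
  subst hE
  rcases Finset.mem_union.1 hx with hx | hxJ
  rcases Finset.mem_union.1 hx with hxI | hxT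
  · refine rejected_of_superset_rejected (by gcongr) (hI'min x hxI) ?_
    exact Finset.erase_union_union_subset x subset_rfl (T'.erase_subset x) (J'.erase_subset x)
  · refine rejected_of_superset_rejected (by gcongr) (hT'min x hxT) ?_
    exact Finset.erase_union_union_subset x hI'x subset_rfl (J'.erase_subset x)
  · refine rejected_of_superset_rejected (by gcongr) (hJ'min x hxJ) ?_
    exact Finset.erase_union_union_subset x hI'x hT'x subset_rfl

/-- compositional correctness of QuickCore: given a partition
`E = I ∪ T ∪ J` into pairwise disjoint parts, successively minimizing `J`,
then `T`, then `I` (each relative to the others) yields a core of `E`. -/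
theorem quickcore_compositional {α : Type*} [DecidableEq α]
    (check : Finset α → Prop) (I T J E : Finset α)
    (hE : E = I ∪ T ∪ J)
    (hIT : Disjoint I T) (hIJ : Disjoint I J) (hTJ : Disjoint T J)
    (mono : ∀ A B : Finset α, A ⊆ B → B ⊆ E → check A → check B)
    (hcheckE : check E)
    (J' : Finset α) (hJ'sub : J' ⊆ J)
    (hJ'check : check (I ∪ T ∪ J'))
    (hJ'min : ∀ x ∈ J', ¬ check (I ∪ T ∪ (J'.erase x)))
    (T' : Finset α) (hT'sub : T' ⊆ T)
    (hT'check : check (I ∪ T' ∪ J'))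
    (hT'min : ∀ x ∈ T', ¬ check (I ∪ (T'.erase x) ∪ J'))
    (I' : Finset α) (hI'sub : I' ⊆ I)
    (hI'check : check (I' ∪ T' ∪ J'))
    (hI'min : ∀ x ∈ I', ¬ check ((I'.erase x) ∪ T' ∪ J')) :
    check (I' ∪ T' ∪ J') ∧
    ∀ x ∈ I' ∪ T' ∪ J', ¬ check ((I' ∪ T' ∪ J').erase x) :=
  quickcore_compositional_general check I T J E hE mono J' hJ'sub hJ'min T' hT'sub hT'min I' hI'sub
    hI'check hI'min
end
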